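/- arXiv:1602.04102 — 2 statements merged into one kernel-verified Lean document; each statement's English description precedes it below -/
import Mathlib

section
/- Let u : ℝ^d → [0,1] be smooth with u ∈ W^{1,1}(ℝ^d), let p ≥ 1 and ε > 0. Then ∫_{ℝ^d} ( ∫_{ℝ^d} ε^{-(d+1)} 1_{‖x−y‖≤ε} |u(y) − u(x)| dy )^p dx ≤ (α_d^{p−1} σ_d / ε^{p−1}) ∫_{ℝ^d} ‖∇u(x)‖ dx. -/
open MeasureTheory Filter Metric Finset ProbabilityTheory
open scoped ENNReal NNReal Topology Classical BigOperators RealInnerProductSpace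

noncomputable section

/-- Euclidean space `ℝ^d`. -/
abbrev Euc (d : ℕ) := EuclideanSpace ℝ (Fin d)

/-- The open unit cube `D = (0,1)^d`. -/
def unitCube (d : ℕ) : Set (Euc d) := {x | ∀ i, x i ∈ Set.Ioo (0:ℝ) 1}

/-- The surface tension `σ_d = ∫_{‖z‖ ≤ 1} |z_1| dz`. -/
def sigmad (d : ℕ) [NeZero d] : ℝ := ∫ z in closedBall (0 : Euc d) 1, |z 0|

/-- `α_d`, the volume of the unit ball in `ℝ^d`. -/
def alphad (d : ℕ) : ℝ := (volume (closedBall (0 : Euc d) 1)).toReal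

/-- Divergence of a vector field. -/
def divg {d : ℕ} (v : Euc d → Euc d) (x : Euc d) : ℝ :=
  ∑ i, fderiv ℝ v x (EuclideanSpace.single i 1) i

/-- The set of values `∫_Ω div v` over admissible test vector fields on `D`. -/
def perimSet (d : ℕ) (Ω : Set (Euc d)) : Set ℝ :=
  {P | ∃ v : Euc d → Euc d, ContDiff ℝ (⊤ : ℕ∞) v ∧ HasCompactSupport v ∧
        tsupport v ⊆ unitCube d ∧ (∀ x ∈ unitCube d, ‖v x‖ ≤ 1) ∧
        P = ∫ x in Ω, divg v x}

/-- Relative perimeter of `Ω` in `D = (0,1)^d` (BV sense). -/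
def relPerim (d : ℕ) (Ω : Set (Euc d)) : ℝ := sSup (perimSet d Ω)

/-- `Ω` has finite relative perimeter in `D`. -/
def HasFinitePerimeter (d : ℕ) (Ω : Set (Euc d)) : Prop := BddAbove (perimSet d Ω)

/-- Nonlocal perimeter `Per_ε(Ω) = (2/ε^{d+1}) ∫_Ω ∫_{D\Ω} 1_{‖x−y‖≤ε}`. -/
def nlPerim (d : ℕ) (ε : ℝ) (Ω : Set (Euc d)) : ℝ :=
  (2 / ε ^ (d + 1)) * ∫ x in Ω, ∫ y in unitCube d \ Ω, (if dist x y ≤ ε then (1:ℝ) else 0)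

/-- The kernel `φ_ε(x,y) = ε^{-(d+1)} 1_{‖x−y‖≤ε} |1_Ω(x) − 1_Ω(y)|`. -/
def phie (d : ℕ) (ε : ℝ) (Ω : Set (Euc d)) (x y : Euc d) : ℝ :=
  (if dist x y ≤ ε then (1:ℝ) else 0) / ε ^ (d + 1) *
    |Set.indicator Ω (fun _ => (1:ℝ)) x - Set.indicator Ω (fun _ => (1:ℝ)) y|

/-- `φ̄_ε(x) = ∫_D φ_ε(x,y) dy`. -/
def phibar (d : ℕ) (ε : ℝ) (Ω : Set (Euc d)) (x : Euc d) : ℝ :=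
  ∫ y in unitCube d, phie d ε Ω x y

/-- The graph perimeter `GPer_{n,ε}(Ω) = (2/(n(n−1))) Σ_{i<j} φ_ε(x_i,x_j)`. -/
def GPer (d n : ℕ) (ε : ℝ) (Ω : Set (Euc d)) (xs : Fin n → Euc d) : ℝ :=
  (2 / ((n:ℝ) * ((n:ℝ) - 1))) *
    ∑ i : Fin n, ∑ j : Fin n, if i < j then phie d ε Ω (xs i) (xs j) else 0

/-- `Ω` has a smooth boundary: it is the sublevel set of a smooth function
with nonvanishing gradient on the boundary. -/
def HasSmoothBoundary {d : ℕ} (Ω : Set (Euc d)) : Prop :=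
  ∃ f : Euc d → ℝ, ContDiff ℝ (⊤ : ℕ∞) f ∧ Ω = {x | f x < 0} ∧
    ∀ x ∈ frontier Ω, fderiv ℝ f x ≠ 0

/-- Volume of the spherical cap `B_d(0,1) ∩ {x : x_d ≥ t}`. -/
def capVol (d : ℕ) [NeZero d] (t : ℝ) : ℝ :=
  (volume (closedBall (0 : Euc d) 1 ∩
    {x : Euc d | t ≤ x ⟨d - 1, Nat.sub_lt (Nat.pos_of_neZero d) one_pos⟩})).toReal

/-- The constant `C_d = 2 ∫_0^1 |B_d(0,1) ∩ {x_d ≥ t}|² dt`. -/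
def Cd (d : ℕ) [NeZero d] : ℝ := 2 * ∫ t in Set.Ioo (0:ℝ) 1, (capVol d t) ^ 2

/-- Perimeter as Hausdorff measure of the boundary, `H^{d−1}(∂Ω)`. -/
def perimH (d : ℕ) (Ω : Set (Euc d)) : ℝ := (μH[(d:ℝ) - 1] (frontier Ω)).toReal

/-- The rate `f(n,ε)` from the moment estimates. -/
def frate (d n : ℕ) (ε : ℝ) : ℝ :=
  if (n:ℝ) ^ (-(1:ℝ)/(d:ℝ)) ≤ ε then 1 / Real.sqrt ((n:ℝ) * ε)
  else 1 / ((n:ℝ) * ε ^ (((d:ℝ) + 1)/2))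


section Helpers

variable {d : ℕ} [NeZero d]

lemma euc_finrank : Module.finrank ℝ (Euc d) = d := finrank_euclideanSpace_fin

lemma euc_vol_closedBall (x : Euc d) {r : ℝ} (hr : 0 ≤ r) :
    volume (closedBall x r) = ENNReal.ofReal (r ^ d) * volume (closedBall (0 : Euc d) 1) := by
  rw [Measure.addHaar_closedBall volume x hr, euc_finrank,
    Measure.addHaar_closedBall_eq_addHaar_ball]

lemma euc_vol_closedBall_toReal (x : Euc d) {r : ℝ} (hr : 0 ≤ r) :
    (volume (closedBall x r)).toReal = r ^ d * alphad d := by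
  rw [euc_vol_closedBall x hr, ENNReal.toReal_mul, ENNReal.toReal_ofReal (by positivity)]
  rfl

lemma sigmad_nonneg : 0 ≤ sigmad d := integral_nonneg fun z => abs_nonneg _

lemma alphad_nonneg : 0 ≤ alphad d := ENNReal.toReal_nonneg

/-- rotation: integral of |⟪e,z⟫| over the unit ball for a unit vector `e`. -/
lemma ball_integral_inner_unit {e : Euc d} (he : ‖e‖ = 1) :
    ∫ z in closedBall (0 : Euc d) 1, |⟪e, z⟫| = sigmad d := by
  have horth : Orthonormal ℝ (({0} : Set (Fin d)).restrict (fun _ : Fin d => e)) := by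
    constructor
    · intro i; exact he
    · intro i j hij
      exact absurd (Subtype.ext ((Set.eq_of_mem_singleton i.2).trans
        (Set.eq_of_mem_singleton j.2).symm)) hij
  obtain ⟨b, hb⟩ := horth.exists_orthonormalBasis_extension_of_card_eq
    (by simp [euc_finrank])
  have hb0 : b 0 = e := hb 0 rfl
  set T : Euc d ≃ₗᵢ[ℝ] Euc d := b.repr.symm with hT
  have hTmp : MeasurePreserving T volume volume := T.measurePreserving
  have hTe : T (EuclideanSpace.single (0 : Fin d) (1:ℝ)) = e := by
    rw [hT]; rw [b.repr_symm_single]; exact hb0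
  have himg : T '' (closedBall (0 : Euc d) 1) = closedBall (0 : Euc d) 1 := by
    ext z
    simp only [Set.mem_image, mem_closedBall, dist_zero_right]
    constructor
    · rintro ⟨w, hw, rfl⟩; rwa [T.norm_map]
    · intro hz; exact ⟨T.symm z, by rwa [T.symm.norm_map], T.apply_symm_apply z⟩
  have key : ∫ z in closedBall (0 : Euc d) 1, |⟪e, z⟫|
      = ∫ w in closedBall (0 : Euc d) 1, |⟪e, T w⟫| := by
    conv_lhs => rw [← himg]
    exact hTmp.setIntegral_image_emb T.toHomeomorph.measurableEmbedding
      (fun z => |⟪e, z⟫|) (closedBall (0 : Euc d) 1)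
  rw [key]
  have : ∀ w : Euc d, |⟪e, T w⟫| = |w 0| := by
    intro w
    rw [← hTe, T.inner_map_map, EuclideanSpace.inner_single_left]
    simp
  simp_rw [this]
  rfl

end Helpers

section Helpers2

variable {d : ℕ} [NeZero d]

lemma ball_integral_clm (L : Euc d →L[ℝ] ℝ) :
    ∫ z in closedBall (0 : Euc d) 1, |L z| = sigmad d * ‖L‖ := by
  rcases eq_or_ne L 0 with rfl | hL
  · simp
  · set v : Euc d := (InnerProductSpace.toDual ℝ (Euc d)).symm L with hv
    have hvL : ∀ z, L z = ⟪v, z⟫ := fun z =>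
      (InnerProductSpace.toDual_symm_apply).symm
    have hvnorm : ‖v‖ = ‖L‖ := LinearIsometryEquiv.norm_map _ L
    have hv0 : v ≠ 0 := by
      intro h
      apply hL
      rw [← norm_eq_zero, ← hvnorm, h, norm_zero]
    set e : Euc d := ‖v‖⁻¹ • v with he
    have hen : ‖e‖ = 1 := by
      rw [he, norm_smul, norm_inv, norm_norm, inv_mul_cancel₀ (norm_ne_zero_iff.2 hv0)]
    have hinner : ∀ z, ⟪v, z⟫ = ‖v‖ * ⟪e, z⟫ := by
      intro z
      rw [he, real_inner_smul_left, ← mul_assoc,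
        mul_inv_cancel₀ (norm_ne_zero_iff.2 hv0), one_mul]
    calc ∫ z in closedBall (0 : Euc d) 1, |L z|
        = ∫ z in closedBall (0 : Euc d) 1, ‖v‖ * |⟪e, z⟫| := by
          congr 1; ext z; rw [hvL, hinner, abs_mul, abs_of_nonneg (norm_nonneg v)]
      _ = ‖v‖ * ∫ z in closedBall (0 : Euc d) 1, |⟪e, z⟫| := integral_const_mul _ _
      _ = sigmad d * ‖L‖ := by rw [ball_integral_inner_unit hen, hvnorm, mul_comm]

end Helpers2

section Helpers3

variable {d : ℕ} [NeZero d]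

lemma ball_integral_clm_scaled (L : Euc d →L[ℝ] ℝ) {r : ℝ} (hr : 0 < r) :
    ∫ z in closedBall (0 : Euc d) r, |L z| = r ^ (d + 1) * (sigmad d * ‖L‖) := by
  set f : Euc d → ℝ := (closedBall (0 : Euc d) r).indicator (fun z => |L z|) with hf
  have hcomp : ∀ x : Euc d, f (r • x)
      = (closedBall (0 : Euc d) 1).indicator (fun x => r * |L x|) x := by
    intro x
    by_cases hx : x ∈ closedBall (0 : Euc d) 1
    · have hmem : r • x ∈ closedBall (0 : Euc d) r := by
        rw [mem_closedBall, dist_zero_right] at hx ⊢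
        rw [norm_smul, Real.norm_eq_abs, abs_of_pos hr]
        calc r * ‖x‖ ≤ r * 1 := by nlinarith
          _ = r := mul_one r
      rw [hf, Set.indicator_of_mem hmem, Set.indicator_of_mem hx, L.map_smul, smul_eq_mul,
        abs_mul, abs_of_pos hr]
    · have hmem : r • x ∉ closedBall (0 : Euc d) r := by
        rw [mem_closedBall, dist_zero_right] at hx ⊢
        rw [norm_smul, Real.norm_eq_abs, abs_of_pos hr]
        intro h
        exact hx (by nlinarith [le_of_not_gt (fun h' : ‖x‖ < 0 => (norm_nonneg x).not_gt h')])
      rw [hf, Set.indicator_of_notMem hmem, Set.indicator_of_notMem hx]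
  have hscale := MeasureTheory.Measure.integral_comp_smul_of_nonneg (volume) f r (hR := hr.le)
  simp_rw [hcomp] at hscale
  rw [integral_indicator (measurableSet_closedBall)] at hscale
  rw [euc_finrank] at hscale
  have h2 : ∫ x in closedBall (0 : Euc d) 1, r * |L x|
      = r * (sigmad d * ‖L‖) := by rw [integral_const_mul, ball_integral_clm]
  rw [h2] at hscale
  have h3 : ∫ z in closedBall (0 : Euc d) r, |L z| = ∫ x, f x := by
    rw [hf, integral_indicator (measurableSet_closedBall)]
  rw [h3]
  have hrd : (r ^ d : ℝ) ≠ 0 := by positivity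
  have := hscale
  rw [smul_eq_mul] at this
  have : ∫ x, f x = r ^ d * (r * (sigmad d * ‖L‖)) := by
    field_simp at this ⊢
    linarith [this]
  rw [this]; ring

lemma ball_lintegral_clm (L : Euc d →L[ℝ] ℝ) {r : ℝ} (hr : 0 < r) :
    ∫⁻ z in closedBall (0 : Euc d) r, ENNReal.ofReal |L z|
      = ENNReal.ofReal (r ^ (d + 1) * (sigmad d * ‖L‖)) := by
  rw [← ball_integral_clm_scaled L hr]
  rw [← ofReal_integral_eq_lintegral_ofReal]
  · exact (L.continuous.abs.continuousOn.integrableOn_compact (isCompact_closedBall _ _))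
  · exact Eventually.of_forall fun z => abs_nonneg _

end Helpers3

section Helpers4

variable {d : ℕ} [NeZero d]

lemma ftc_bound {u : Euc d → ℝ} (hu : ContDiff ℝ (⊤ : ℕ∞) u) (x z : Euc d) :
    |u (x + z) - u x| ≤ ∫ t in Set.Ioc (0:ℝ) 1, |(fderiv ℝ u (x + t • z)) z| := by
  have hderiv : ∀ t : ℝ, HasDerivAt (fun s : ℝ => u (x + s • z))
      ((fderiv ℝ u (x + t • z)) z) t := by
    intro t
    have h1 : HasDerivAt (fun s : ℝ => x + s • z) z t := by
      simpa using ((hasDerivAt_id t).smul_const z).const_add x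
    exact (hu.differentiable (by simp) (x + t • z)).hasFDerivAt.comp_hasDerivAt t h1
  have hcont : Continuous fun t : ℝ => (fderiv ℝ u (x + t • z)) z := by
    have h1 : Continuous (fderiv ℝ u) := hu.continuous_fderiv (by simp)
    have h2 : Continuous fun t : ℝ => x + t • z := by continuity
    exact (h1.comp h2).clm_apply continuous_const
  have heq : ∫ t in (0:ℝ)..1, (fderiv ℝ u (x + t • z)) z
      = u (x + (1:ℝ) • z) - u (x + (0:ℝ) • z) :=
    intervalIntegral.integral_eq_sub_of_hasDerivAt (fun t _ => hderiv t)
      (hcont.intervalIntegrable 0 1)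
  have heq2 : u (x + z) - u x = ∫ t in (0:ℝ)..1, (fderiv ℝ u (x + t • z)) z := by
    rw [heq]; simp
  rw [heq2]
  calc |∫ t in (0:ℝ)..1, (fderiv ℝ u (x + t • z)) z|
      ≤ ∫ t in (0:ℝ)..1, |(fderiv ℝ u (x + t • z)) z| := by
        simpa [Real.norm_eq_abs] using
          intervalIntegral.norm_integral_le_integral_norm
            (f := fun t : ℝ => (fderiv ℝ u (x + t • z)) z) (zero_le_one)
    _ = ∫ t in Set.Ioc (0:ℝ) 1, |(fderiv ℝ u (x + t • z)) z| :=
        intervalIntegral.integral_of_le zero_le_one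

lemma ftc_bound_lintegral {u : Euc d → ℝ} (hu : ContDiff ℝ (⊤ : ℕ∞) u) (x z : Euc d) :
    ENNReal.ofReal |u (x + z) - u x|
      ≤ ∫⁻ t in Set.Ioc (0:ℝ) 1, ENNReal.ofReal |(fderiv ℝ u (x + t • z)) z| := by
  refine le_trans (ENNReal.ofReal_le_ofReal (ftc_bound hu x z)) ?_
  rw [ofReal_integral_eq_lintegral_ofReal]
  · have hcont : Continuous fun t : ℝ => |(fderiv ℝ u (x + t • z)) z| := by
      have h1 : Continuous (fderiv ℝ u) := hu.continuous_fderiv (by simp)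
      have h2 : Continuous fun t : ℝ => x + t • z := by continuity
      exact ((h1.comp h2).clm_apply continuous_const).abs
    exact (hcont.integrableOn_Icc (a := 0) (b := 1)).mono_set Set.Ioc_subset_Icc_self
  · exact Eventually.of_forall fun t => abs_nonneg _

end Helpers4

section StepC

variable {d : ℕ} [NeZero d]

lemma stepC {u : Euc d → ℝ} (hu : ContDiff ℝ (⊤ : ℕ∞) u) {ε : ℝ} (hε : 0 < ε) :
    ∫⁻ x, ∫⁻ y in closedBall x ε, ENNReal.ofReal |u y - u x|
      ≤ ENNReal.ofReal (ε ^ (d+1) * sigmad d) * ∫⁻ x, ENNReal.ofReal ‖fderiv ℝ u x‖ := by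
  have hDuc : Continuous (fderiv ℝ u) := hu.continuous_fderiv (by simp)
  set B : Set (Euc d) := closedBall (0 : Euc d) ε with hB
  set I : Set ℝ := Set.Ioc (0:ℝ) 1 with hI
  have hGc : Continuous fun q : (Euc d × Euc d) × ℝ =>
      ENNReal.ofReal |(fderiv ℝ u (q.1.1 + q.2 • q.1.2)) q.1.2| := by
    apply ENNReal.continuous_ofReal.comp
    apply Continuous.abs
    have hc1 : Continuous fun q : (Euc d × Euc d) × ℝ => q.1.1 + q.2 • q.1.2 :=
      continuous_fst.fst.add (continuous_snd.smul continuous_fst.snd)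
    exact (hDuc.comp hc1).clm_apply continuous_fst.snd
  -- step 1: translation
  have h1 : ∀ x : Euc d, (∫⁻ y in closedBall x ε, ENNReal.ofReal |u y - u x|)
      = ∫⁻ z in B, ENNReal.ofReal |u (x + z) - u x| := by
    intro x
    rw [← lintegral_indicator measurableSet_closedBall,
      ← lintegral_indicator measurableSet_closedBall]
    rw [← lintegral_add_left_eq_self
      ((closedBall x ε).indicator fun y => ENNReal.ofReal |u y - u x|) x]
    congr 1; funext z
    by_cases hz : z ∈ B
    · have hmem : x + z ∈ closedBall x ε := by
        rw [mem_closedBall, dist_eq_norm, add_sub_cancel_left]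
        rw [hB, mem_closedBall, dist_zero_right] at hz; exact hz
      rw [Set.indicator_of_mem hmem, Set.indicator_of_mem hz]
    · have hmem : x + z ∉ closedBall x ε := by
        rw [mem_closedBall, dist_eq_norm, add_sub_cancel_left]
        rw [hB, mem_closedBall, dist_zero_right] at hz; exact hz
      rw [Set.indicator_of_notMem hmem, Set.indicator_of_notMem hz]
  -- step 2: FTC bound
  have h2 : ∀ x : Euc d, (∫⁻ z in B, ENNReal.ofReal |u (x + z) - u x|)
      ≤ ∫⁻ z in B, ∫⁻ t in I, ENNReal.ofReal |(fderiv ℝ u (x + t • z)) z| :=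
    fun x => lintegral_mono fun z => ftc_bound_lintegral hu x z
  -- swaps
  have hswap1 : (∫⁻ x, ∫⁻ z in B, ∫⁻ t in I, ENNReal.ofReal |(fderiv ℝ u (x + t • z)) z|)
      = ∫⁻ z in B, ∫⁻ x, ∫⁻ t in I, ENNReal.ofReal |(fderiv ℝ u (x + t • z)) z| := by
    apply lintegral_lintegral_swap
    apply Measurable.aemeasurable
    exact (hGc.measurable.lintegral_prod_right' :
      Measurable fun p : Euc d × Euc d =>
        ∫⁻ t in I, ENNReal.ofReal |(fderiv ℝ u (p.1 + t • p.2)) p.2|)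
  have hswap2 : ∀ z : Euc d, (∫⁻ x, ∫⁻ t in I, ENNReal.ofReal |(fderiv ℝ u (x + t • z)) z|)
      = ∫⁻ t in I, ∫⁻ x, ENNReal.ofReal |(fderiv ℝ u (x + t • z)) z| := by
    intro z
    apply lintegral_lintegral_swap
    apply Measurable.aemeasurable
    have : Continuous fun p : Euc d × ℝ =>
        ENNReal.ofReal |(fderiv ℝ u (p.1 + p.2 • z)) z| :=
      ENNReal.continuous_ofReal.comp
        (((hDuc.comp (continuous_fst.add (continuous_snd.smul continuous_const))).clm_apply
          continuous_const).abs)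
    exact this.measurable
  have htrans : ∀ (z : Euc d) (t : ℝ),
      (∫⁻ x, ENNReal.ofReal |(fderiv ℝ u (x + t • z)) z|)
        = ∫⁻ x, ENNReal.ofReal |(fderiv ℝ u x) z| := fun z t =>
    lintegral_add_right_eq_self (fun x => ENNReal.ofReal |(fderiv ℝ u x) z|) (t • z)
  have hIconst : ∀ z : Euc d,
      (∫⁻ _ in I, ∫⁻ x, ENNReal.ofReal |(fderiv ℝ u x) z|)
        = ∫⁻ x, ENNReal.ofReal |(fderiv ℝ u x) z| := by
    intro z
    rw [setLIntegral_const, hI, Real.volume_Ioc]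
    simp
  have hswap3 : (∫⁻ z in B, ∫⁻ x, ENNReal.ofReal |(fderiv ℝ u x) z|)
      = ∫⁻ x, ∫⁻ z in B, ENNReal.ofReal |(fderiv ℝ u x) z| := by
    apply lintegral_lintegral_swap
    apply Measurable.aemeasurable
    have : Continuous fun p : Euc d × Euc d => ENNReal.ofReal |(fderiv ℝ u p.2) p.1| := by
      apply ENNReal.continuous_ofReal.comp
      exact ((hDuc.comp continuous_snd).clm_apply continuous_fst).abs
    exact this.measurable
  have hball : ∀ x : Euc d, (∫⁻ z in B, ENNReal.ofReal |(fderiv ℝ u x) z|)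
      = ENNReal.ofReal (ε ^ (d+1) * sigmad d) * ENNReal.ofReal ‖fderiv ℝ u x‖ := by
    intro x
    rw [hB, ball_lintegral_clm (fderiv ℝ u x) hε]
    rw [show ε ^ (d+1) * (sigmad d * ‖fderiv ℝ u x‖)
        = (ε ^ (d+1) * sigmad d) * ‖fderiv ℝ u x‖ by ring]
    rw [ENNReal.ofReal_mul (mul_nonneg (by positivity) sigmad_nonneg)]
  calc (∫⁻ x, ∫⁻ y in closedBall x ε, ENNReal.ofReal |u y - u x|)
      = ∫⁻ x, ∫⁻ z in B, ENNReal.ofReal |u (x + z) - u x| := lintegral_congr h1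
    _ ≤ ∫⁻ x, ∫⁻ z in B, ∫⁻ t in I, ENNReal.ofReal |(fderiv ℝ u (x + t • z)) z| :=
        lintegral_mono h2
    _ = ∫⁻ z in B, ∫⁻ x, ∫⁻ t in I, ENNReal.ofReal |(fderiv ℝ u (x + t • z)) z| := hswap1
    _ = ∫⁻ z in B, ∫⁻ t in I, ∫⁻ x, ENNReal.ofReal |(fderiv ℝ u (x + t • z)) z| :=
        lintegral_congr fun z => hswap2 z
    _ = ∫⁻ z in B, ∫⁻ x, ENNReal.ofReal |(fderiv ℝ u x) z| := by
        apply lintegral_congr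
        intro z
        rw [← hIconst z]
        exact setLIntegral_congr_fun measurableSet_Ioc
          (fun t _ => htrans z t)
    _ = ∫⁻ x, ∫⁻ z in B, ENNReal.ofReal |(fderiv ℝ u x) z| := hswap3
    _ = ∫⁻ x, ENNReal.ofReal (ε ^ (d+1) * sigmad d) * ENNReal.ofReal ‖fderiv ℝ u x‖ :=
        lintegral_congr hball
    _ = ENNReal.ofReal (ε ^ (d+1) * sigmad d) * ∫⁻ x, ENNReal.ofReal ‖fderiv ℝ u x‖ := by
        rw [lintegral_const_mul']
        exact ENNReal.ofReal_ne_top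

end StepC

/-- nonlocal energy bound for smooth `W^{1,1}` functions with values in `[0,1]`. -/
theorem nonlocal_energy_bound (d : ℕ) [NeZero d] (hd : 2 ≤ d)
    (u : Euc d → ℝ) (hu : ContDiff ℝ (⊤ : ℕ∞) u) (hrange : ∀ x, u x ∈ Set.Icc (0:ℝ) 1)
    (huL1 : Integrable u) (hgradL1 : Integrable (fun x => ‖fderiv ℝ u x‖))
    (p : ℝ) (hp : 1 ≤ p) (ε : ℝ) (hε : 0 < ε) :
    ∫ x, (∫ y, (if dist x y ≤ ε then (1:ℝ) else 0) / ε ^ (d+1) * |u y - u x|) ^ p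
      ≤ alphad d ^ (p - 1) * sigmad d / ε ^ (p - 1) * ∫ x, ‖fderiv ℝ u x‖ := by
  have hεd : (0:ℝ) < ε ^ (d+1) := by positivity
  set c : ℝ := (ε ^ (d+1))⁻¹ with hc
  have hc0 : 0 ≤ c := by positivity
  set K : Euc d → Euc d → ℝ :=
    fun x y => (if dist x y ≤ ε then (1:ℝ) else 0) / ε ^ (d+1) * |u y - u x| with hK
  set g : Euc d → ℝ := fun x => ∫ y, K x y with hg
  have hKnn : ∀ x y, 0 ≤ K x y := fun x y =>
    mul_nonneg (div_nonneg (by split_ifs <;> norm_num) hεd.le) (abs_nonneg _)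
  have hg_nonneg : ∀ x, 0 ≤ g x := fun x => integral_nonneg (hKnn x)
  -- upper bound for g
  have habs1 : ∀ x y, |u y - u x| ≤ 1 := by
    intro x y
    rw [abs_sub_le_iff]
    obtain ⟨h1, h2⟩ := hrange x
    obtain ⟨h3, h4⟩ := hrange y
    constructor <;> linarith
  have hKle : ∀ x y, K x y ≤ (closedBall x ε).indicator (fun _ => c) y := by
    intro x y
    by_cases h : dist x y ≤ ε
    · have hmem : y ∈ closedBall x ε := by rwa [mem_closedBall, dist_comm]
      rw [Set.indicator_of_mem hmem, hK]
      simp only [h, if_pos]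
      calc (1:ℝ) / ε ^ (d+1) * |u y - u x| ≤ 1 / ε ^ (d+1) * 1 := by
            apply mul_le_mul_of_nonneg_left (habs1 x y) (by positivity)
        _ = c := by rw [mul_one, one_div]
    · have hmem : y ∉ closedBall x ε := by rwa [mem_closedBall, dist_comm]
      rw [Set.indicator_of_notMem hmem, hK]
      simp [h]
  have hgle : ∀ x, g x ≤ alphad d / ε := by
    intro x
    have hUi : Integrable ((closedBall x ε).indicator (fun _ => c)) :=
      (integrable_indicator_iff measurableSet_closedBall).2
        (integrableOn_const measure_closedBall_lt_top.ne (by simp))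
    have h1 : g x ≤ ∫ y, (closedBall x ε).indicator (fun _ => c) y :=
      integral_mono_of_nonneg (Eventually.of_forall (hKnn x)) hUi
        (Eventually.of_forall (hKle x))
    have h2 : ∫ y, (closedBall x ε).indicator (fun _ => c) y = (ε ^ d * alphad d) * c := by
      rw [integral_indicator_const _ measurableSet_closedBall, smul_eq_mul, measureReal_def,
        euc_vol_closedBall_toReal x hε.le]
    rw [h2] at h1
    refine h1.trans (le_of_eq ?_)
    rw [hc]
    field_simp
    ring
  -- measurability
  have hKm : Measurable (Function.uncurry K) := by
    have h1 : Measurable fun q : Euc d × Euc d => (if dist q.1 q.2 ≤ ε then (1:ℝ) else 0) := by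
      apply Measurable.ite _ measurable_const measurable_const
      exact measurableSet_le (continuous_fst.dist continuous_snd).measurable measurable_const
    have h2 : Measurable fun q : Euc d × Euc d => |u q.2 - u q.1| :=
      (((hu.continuous.comp continuous_snd).sub (hu.continuous.comp continuous_fst)).abs).measurable
    exact (h1.div_const _).mul h2
  have hgm : AEStronglyMeasurable g volume := by
    exact ((hKm.stronglyMeasurable.integral_prod_right' (ν := volume))).aestronglyMeasurable
  -- lintegral identity for the inner integral
  have hIeq : ∀ x, (∫⁻ y, ENNReal.ofReal (K x y))
      = ENNReal.ofReal c * ∫⁻ y in closedBall x ε, ENNReal.ofReal |u y - u x| := by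
    intro x
    rw [← lintegral_indicator measurableSet_closedBall,
      ← lintegral_const_mul' _ _ ENNReal.ofReal_ne_top]
    congr 1; funext y
    by_cases h : dist x y ≤ ε
    · have hmem : y ∈ closedBall x ε := by rwa [mem_closedBall, dist_comm]
      rw [Set.indicator_of_mem hmem, hK]
      simp only [h, if_pos]
      rw [one_div, ← ENNReal.ofReal_mul hc0]
    · have hmem : y ∉ closedBall x ε := by rwa [mem_closedBall, dist_comm]
      rw [Set.indicator_of_notMem hmem, hK]
      simp [h]
  -- main lintegral bound
  have hTnn : 0 ≤ ∫ x, ‖fderiv ℝ u x‖ := integral_nonneg fun x => norm_nonneg _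
  have hlint : (∫⁻ x, ENNReal.ofReal (g x))
      ≤ ENNReal.ofReal (sigmad d * ∫ x, ‖fderiv ℝ u x‖) := by
    have h0 : ∀ x, ENNReal.ofReal (g x) ≤ ∫⁻ y, ENNReal.ofReal (K x y) := by
      intro x
      by_cases hint : Integrable (K x)
      · rw [hg]
        rw [ofReal_integral_eq_lintegral_ofReal hint (Eventually.of_forall (hKnn x))]
      · rw [hg]
        simp only [integral_undef hint, ENNReal.ofReal_zero]
        exact bot_le
    have hDu_lint : (∫⁻ x, ENNReal.ofReal ‖fderiv ℝ u x‖)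
        = ENNReal.ofReal (∫ x, ‖fderiv ℝ u x‖) :=
      (ofReal_integral_eq_lintegral_ofReal hgradL1
        (Eventually.of_forall fun x => norm_nonneg _)).symm
    calc (∫⁻ x, ENNReal.ofReal (g x))
        ≤ ∫⁻ x, ∫⁻ y, ENNReal.ofReal (K x y) := lintegral_mono h0
      _ = ∫⁻ x, ENNReal.ofReal c * ∫⁻ y in closedBall x ε, ENNReal.ofReal |u y - u x| :=
          lintegral_congr hIeq
      _ = ENNReal.ofReal c * ∫⁻ x, ∫⁻ y in closedBall x ε, ENNReal.ofReal |u y - u x| :=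
          lintegral_const_mul' _ _ ENNReal.ofReal_ne_top
      _ ≤ ENNReal.ofReal c *
            (ENNReal.ofReal (ε ^ (d+1) * sigmad d) * ∫⁻ x, ENNReal.ofReal ‖fderiv ℝ u x‖) :=
          mul_le_mul_right (stepC hu hε) _
      _ = ENNReal.ofReal (sigmad d * ∫ x, ‖fderiv ℝ u x‖) := by
          rw [hDu_lint, ← mul_assoc, ← ENNReal.ofReal_mul hc0,
            ← ENNReal.ofReal_mul (mul_nonneg hc0 (mul_nonneg hεd.le sigmad_nonneg))]
          congr 1
          rw [hc]
          field_simp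
  have hgint : Integrable g := by
    refine ⟨hgm, ?_⟩
    rw [hasFiniteIntegral_iff_ofReal (Eventually.of_forall hg_nonneg)]
    exact lt_of_le_of_lt hlint ENNReal.ofReal_lt_top
  have hgint2 : ∫ x, g x ≤ sigmad d * ∫ x, ‖fderiv ℝ u x‖ := by
    rw [integral_eq_lintegral_of_nonneg_ae (Eventually.of_forall hg_nonneg) hgm]
    have h := ENNReal.toReal_mono ENNReal.ofReal_ne_top hlint
    rwa [ENNReal.toReal_ofReal (mul_nonneg sigmad_nonneg hTnn)] at h
  -- pointwise power bound
  set M : ℝ := alphad d / ε with hM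
  have hM0 : 0 ≤ M := div_nonneg alphad_nonneg hε.le
  have hpow : ∀ x, (g x) ^ p ≤ M ^ (p-1) * g x := by
    intro x
    have h0 := hg_nonneg x
    rcases eq_or_lt_of_le h0 with h | h
    · rw [← h, Real.zero_rpow (by linarith : p ≠ 0), mul_zero]
    · have heq : g x ^ p = g x ^ (p-1) * g x := by
        rw [← Real.rpow_add_one h.ne' (p-1), sub_add_cancel]
      rw [heq]
      exact mul_le_mul_of_nonneg_right
        (Real.rpow_le_rpow h0 (hgle x) (by linarith)) h0
  -- final assembly
  show ∫ x, (g x) ^ p ≤ alphad d ^ (p - 1) * sigmad d / ε ^ (p - 1) * ∫ x, ‖fderiv ℝ u x‖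
  calc ∫ x, (g x) ^ p
      ≤ ∫ x, M ^ (p-1) * g x :=
        integral_mono_of_nonneg
          (Eventually.of_forall fun x => Real.rpow_nonneg (hg_nonneg x) p)
          (hgint.const_mul _) (Eventually.of_forall hpow)
    _ = M ^ (p-1) * ∫ x, g x := integral_const_mul _ _
    _ ≤ M ^ (p-1) * (sigmad d * ∫ x, ‖fderiv ℝ u x‖) :=
        mul_le_mul_of_nonneg_left hgint2 (Real.rpow_nonneg hM0 _)
    _ = alphad d ^ (p - 1) * sigmad d / ε ^ (p - 1) * ∫ x, ‖fderiv ℝ u x‖ := by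
        rw [hM, Real.div_rpow alphad_nonneg hε.le]
        ring


end
end

section
/- For the half-space restricted to D: if Ω = { x ∈ (0,1)^d : x_1 ≤ 1/2 }, then the nonlocal perimeter Per_ε(Ω) = (2/ε^{d+1}) ∫_Ω ∫_{D∖Ω} 1_{‖x−y‖≤ε} dx dy approaches σ_d · Per(Ω) = σ_d with an error of exactly order ε as ε → 0; in particular |Per_ε(Ω) − σ_d| ≥ c·ε for some constant c > 0 and all small ε. -/
open MeasureTheory Filter Metric Finset ProbabilityTheory
open scoped ENNReal NNReal Topology Classical BigOperators RealInnerProductSpace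

noncomputable section

namespace HC
variable {d : ℕ} [NeZero d]

def Om (d : ℕ) [NeZero d] : Set (Euc d) := {x ∈ unitCube d | x 0 ≤ 1/2}
def Sc (d : ℕ) [NeZero d] : Set (Euc d) := unitCube d \ Om d

lemma meas_coord (i : Fin d) : Measurable (fun x : Euc d => x i) :=
  (EuclideanSpace.proj i).continuous.measurable

lemma unitCube_meas : MeasurableSet (unitCube d) := by
  have : unitCube d = ⋂ i, (fun x : Euc d => x i) ⁻¹' Set.Ioo 0 1 := by
    ext x; simp [unitCube]
  rw [this]
  exact MeasurableSet.iInter fun i => (meas_coord i) measurableSet_Ioo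

lemma Om_meas : MeasurableSet (Om d) :=
  unitCube_meas.inter ((meas_coord 0) measurableSet_Iic)

lemma Sc_meas : MeasurableSet (Sc d) := unitCube_meas.diff Om_meas

lemma abs_coord_le (x : Euc d) (i : Fin d) : |x i| ≤ ‖x‖ := by
  rw [EuclideanSpace.norm_eq x]
  have h1 : |x i| = Real.sqrt (‖x i‖^2) := by rw [Real.sqrt_sq_eq_abs]; simp
  rw [h1]
  exact Real.sqrt_le_sqrt (Finset.single_le_sum (f := fun j => ‖x j‖^2)
    (fun j _ => sq_nonneg _) (mem_univ i))

/-- inner integral -/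
lemma inner_eq (ε : ℝ) (x : Euc d) :
    (∫ y in Sc d, (if dist x y ≤ ε then (1:ℝ) else 0)) =
      (volume (Sc d ∩ closedBall x ε)).toReal := by
  have h1 : ∀ y : Euc d, (if dist x y ≤ ε then (1:ℝ) else 0) =
      Set.indicator (closedBall x ε) (fun _ => (1:ℝ)) y := by
    intro y
    simp only [Set.indicator, mem_closedBall]
    rw [dist_comm x y]
  simp_rw [h1]
  rw [setIntegral_indicator measurableSet_closedBall, setIntegral_const]
  simp
  rfl

def nu (d : ℕ) [NeZero d] (ε : ℝ) (x : Euc d) : ℝ≥0∞ := volume (Sc d ∩ closedBall x ε)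

lemma nu_meas (ε : ℝ) : Measurable (nu d ε) := by
  have hW : MeasurableSet {p : Euc d × Euc d | p.2 ∈ Sc d ∧ dist p.1 p.2 ≤ ε} := by
    apply (Sc_meas.preimage measurable_snd).inter
    exact measurableSet_le (Measurable.dist measurable_fst measurable_snd) measurable_const
  have := measurable_measure_prodMk_left (ν := (volume : Measure (Euc d))) hW
  convert this using 2 with x
  unfold nu
  congr 1
  ext y
  simp [dist_comm x y]

def hset (d : ℕ) [NeZero d] (z : Euc d) : Set (Euc d) := Om d ∩ (fun x => x + z) ⁻¹' Sc d

lemma hset_meas (z : Euc d) : MeasurableSet (hset d z) :=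
  Om_meas.inter (Sc_meas.preimage (measurable_id.add_const z))

lemma lint_eq (ε : ℝ) :
    (∫⁻ x in Om d, nu d ε x) = ∫⁻ z in closedBall 0 ε, volume (hset d z) := by
  set W : Set (Euc d × Euc d) :=
    {p | p.1 ∈ Om d ∧ p.1 + p.2 ∈ Sc d ∧ ‖p.2‖ ≤ ε} with hWdef
  have hW : MeasurableSet W := by
    apply (Om_meas.preimage measurable_fst).inter
    apply (Sc_meas.preimage (measurable_fst.add measurable_snd)).inter
    exact measurableSet_le measurable_snd.norm measurable_const
  have left : (volume.prod volume) W = ∫⁻ x in Om d, nu d ε x := by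
    rw [Measure.prod_apply hW]
    have : ∀ x : Euc d, volume (Prod.mk x ⁻¹' W) =
        Set.indicator (Om d) (nu d ε) x := by
      intro x
      by_cases hx : x ∈ Om d
      · rw [Set.indicator_of_mem hx]
        have : Prod.mk x ⁻¹' W = (fun z => x + z) ⁻¹' (Sc d ∩ closedBall x ε) := by
          ext z
          simp only [Set.mem_preimage, Set.mem_setOf_eq, hWdef, Set.mem_inter_iff,
            mem_closedBall, hx, true_and]
          have : dist (x + z) x = ‖z‖ := by
            rw [dist_eq_norm]; simp
          rw [this]
        rw [this, measure_preimage_add]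
        rfl
      · rw [Set.indicator_of_notMem hx]
        have : Prod.mk x ⁻¹' W = ∅ := by
          ext z; simp [hWdef, hx]
        simp [this]
    simp_rw [this]
    rw [lintegral_indicator Om_meas]
  have right : (volume.prod volume) W = ∫⁻ z in closedBall 0 ε, volume (hset d z) := by
    rw [Measure.prod_apply_symm hW]
    have : ∀ z : Euc d, volume ((fun x => (x, z)) ⁻¹' W) =
        Set.indicator (closedBall (0 : Euc d) ε) (fun z => volume (hset d z)) z := by
      intro z
      by_cases hz : z ∈ closedBall (0 : Euc d) ε
      · rw [Set.indicator_of_mem hz]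
        have hz' : ‖z‖ ≤ ε := by rwa [mem_closedBall, dist_zero_right] at hz
        congr 1
        ext x
        simp [hWdef, hset, hz', and_assoc]
      · rw [Set.indicator_of_notMem hz]
        have hz' : ¬ ‖z‖ ≤ ε := by rwa [mem_closedBall, dist_zero_right] at hz
        have : (fun x => (x, z)) ⁻¹' W = ∅ := by
          ext x; simp [hWdef, hz']
        simp [this]
    simp_rw [this]
    rw [lintegral_indicator measurableSet_closedBall]
  rw [← left, right]

def Aset (a : ℝ) : Set ℝ :=
  {t | t ∈ Set.Ioo (0:ℝ) 1 ∧ t ≤ 1/2 ∧ t + a ∈ Set.Ioo (0:ℝ) 1 ∧ 1/2 < t + a}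
def Bset (a : ℝ) : Set ℝ := {t | t ∈ Set.Ioo (0:ℝ) 1 ∧ t + a ∈ Set.Ioo (0:ℝ) 1}

lemma volB {a : ℝ} (ha : |a| ≤ 1) : volume (Bset a) = ENNReal.ofReal (1 - |a|) := by
  have h : Bset a = Set.Ioo (max 0 (-a)) (min 1 (1 - a)) := by
    have : Bset a = Set.Ioo 0 1 ∩ Set.Ioo (-a) (1 - a) := by
      ext t
      simp only [Bset, Set.mem_inter_iff, Set.mem_Ioo, Set.mem_setOf_eq]
      constructor
      · rintro ⟨⟨h1, h2⟩, h3, h4⟩; exact ⟨⟨h1, h2⟩, by linarith, by linarith⟩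
      · rintro ⟨⟨h1, h2⟩, h3, h4⟩; exact ⟨⟨h1, h2⟩, by linarith, by linarith⟩
    rw [this, Set.Ioo_inter_Ioo]
  rw [h, Real.volume_Ioo]
  congr 1
  rcases le_or_gt 0 a with h0 | h0
  · rw [abs_of_nonneg h0]
    rw [max_eq_left (by linarith), min_eq_right (by linarith)]
    ring
  · rw [abs_of_neg h0]
    rw [max_eq_right (by linarith), min_eq_left (by linarith)]

lemma volA {a : ℝ} (ha : |a| ≤ 1/2) : volume (Aset a) = ENNReal.ofReal (max a 0) := by
  rcases le_or_gt a 0 with h0 | h0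
  · have : Aset a = ∅ := by
      ext t
      simp only [Aset, Set.mem_empty_iff_false, iff_false, Set.mem_setOf_eq, Set.mem_Ioo]
      rintro ⟨⟨h1, h2⟩, h3, ⟨h4, h5⟩, h6⟩
      linarith
    rw [this, max_eq_right h0]
    simp
  · have ha2 : a ≤ 1/2 := le_trans (le_abs_self a) ha
    have hsub : Set.Ioo (1/2 - a) (1/2) ⊆ Aset a := by
      intro t ht
      obtain ⟨h1, h2⟩ := ht
      refine ⟨⟨by linarith, by linarith⟩, by linarith, ⟨by linarith, by linarith⟩, by linarith⟩
    have hsup : Aset a ⊆ Set.Ioc (1/2 - a) (1/2) := by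
      rintro t ⟨⟨h1, h2⟩, h3, ⟨h4, h5⟩, h6⟩
      exact ⟨by linarith, h3⟩
    have hle := measure_mono (μ := volume) hsub
    have hge := measure_mono (μ := volume) hsup
    rw [Real.volume_Ioo] at hle
    rw [Real.volume_Ioc] at hge
    rw [max_eq_left h0.le]
    have : (1:ℝ)/2 - (1/2 - a) = a := by ring
    rw [this] at hle hge
    exact le_antisymm hge hle

def gfun (d : ℕ) [NeZero d] (z : Euc d) : ℝ :=
  max (z 0) 0 * ∏ i ∈ Finset.univ.erase (0 : Fin d), (1 - |z i|)

lemma Sc_eq : Sc d = {y : Euc d | (∀ i, y i ∈ Set.Ioo (0:ℝ) 1) ∧ 1/2 < y 0} := by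
  ext y
  simp only [Sc, Om, unitCube, Set.mem_diff, Set.mem_setOf_eq, Set.mem_sep_iff, not_and, not_le]
  constructor
  · rintro ⟨h1, h2⟩; exact ⟨h1, h2 h1⟩
  · rintro ⟨h1, h2⟩; exact ⟨h1, fun _ => h2⟩

lemma hset_eq (z : Euc d) :
    hset d z = WithLp.ofLp ⁻¹' Set.univ.pi (fun i => if i = 0 then Aset (z 0) else Bset (z i)) := by
  ext x
  constructor
  · rintro ⟨⟨hD, h0⟩, hxz⟩
    rw [Sc_eq] at hxz
    obtain ⟨hD', h0'⟩ := hxz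
    intro i _
    dsimp only
    by_cases hi : i = 0
    · subst hi
      rw [if_pos rfl]
      exact ⟨hD 0, h0, hD' 0, h0'⟩
    · rw [if_neg hi]
      exact ⟨hD i, hD' i⟩
  · intro h
    have h0 := h 0 (Set.mem_univ _)
    dsimp only at h0
    rw [if_pos rfl] at h0
    obtain ⟨hI, hle, hI', hlt⟩ := h0
    have hB : ∀ i : Fin d, i ≠ 0 → x i ∈ Set.Ioo (0:ℝ) 1 ∧ x i + z i ∈ Set.Ioo (0:ℝ) 1 := by
      intro i hi
      have := h i (Set.mem_univ _)
      dsimp only at this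
      rwa [if_neg hi] at this
    refine ⟨⟨fun i => ?_, hle⟩, ?_⟩
    · by_cases hi : i = 0
      · subst hi; exact hI
      · exact (hB i hi).1
    · rw [Sc_eq]
      refine ⟨fun i => ?_, hlt⟩
      by_cases hi : i = 0
      · subst hi; exact hI'
      · exact (hB i hi).2

lemma Aset_meas (a : ℝ) : MeasurableSet (Aset a) := by
  have : Aset a = (Set.Ioo (0:ℝ) 1) ∩ (Set.Iic (1/2) ∩
      ((fun t => t + a) ⁻¹' Set.Ioo (0:ℝ) 1 ∩ (fun t => t + a) ⁻¹' Set.Ioi (1/2))) := by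
    ext t; simp only [Aset, Set.mem_inter_iff, Set.mem_Ioo, Set.mem_Iic, Set.mem_preimage,
      Set.mem_Ioi, Set.mem_setOf_eq, and_assoc]
  rw [this]
  exact measurableSet_Ioo.inter (measurableSet_Iic.inter
    ((measurableSet_Ioo.preimage (measurable_id.add_const a)).inter
     (measurableSet_Ioi.preimage (measurable_id.add_const a))))

lemma Bset_meas (a : ℝ) : MeasurableSet (Bset a) := by
  have : Bset a = (Set.Ioo (0:ℝ) 1) ∩ (fun t => t + a) ⁻¹' Set.Ioo (0:ℝ) 1 := by
    ext t; simp only [Bset, Set.mem_inter_iff, Set.mem_Ioo, Set.mem_preimage, Set.mem_setOf_eq]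
  rw [this]
  exact measurableSet_Ioo.inter (measurableSet_Ioo.preimage (measurable_id.add_const a))

lemma hvol {z : Euc d} (hz : ∀ i, |z i| ≤ 1/2) :
    volume (hset d z) = ENNReal.ofReal (gfun d z) := by
  rw [hset_eq]
  have htrans : (volume : Measure (Euc d))
      (WithLp.ofLp ⁻¹' Set.univ.pi (fun i => if i = 0 then Aset (z 0) else Bset (z i))) =
      (@volume (Fin d → ℝ) MeasureSpace.pi)
        (Set.univ.pi (fun i => if i = 0 then Aset (z 0) else Bset (z i))) := by
    have hA : MeasurableSet (α := Fin d → ℝ)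
        (Set.univ.pi (fun i => if i = 0 then Aset (z 0) else Bset (z i))) := by
      refine MeasurableSet.univ_pi (fun i => ?_)
      by_cases hi : i = 0
      · subst hi; rw [if_pos rfl]; exact Aset_meas _
      · rw [if_neg hi]; exact Bset_meas _
    exact (PiLp.volume_preserving_ofLp (Fin d)).measure_preimage
      hA.nullMeasurableSet
  refine htrans.trans ?_
  rw [volume_pi_pi]
  rw [← Finset.mul_prod_erase Finset.univ _ (Finset.mem_univ (0 : Fin d))]
  have hrest : (∏ i ∈ Finset.univ.erase (0 : Fin d),
        volume (if i = 0 then Aset (z 0) else Bset (z i))) =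
      ∏ i ∈ Finset.univ.erase (0 : Fin d), ENNReal.ofReal (1 - |z i|) := by
    refine Finset.prod_congr rfl (fun i hi => ?_)
    have hi' := Finset.ne_of_mem_erase hi
    rw [if_neg hi', volB (le_trans (hz i) (by norm_num))]
  rw [if_pos rfl, volA (hz 0), hrest]
  rw [gfun, ENNReal.ofReal_mul (le_max_right _ _), ENNReal.ofReal_prod_of_nonneg]
  intro i hi
  have := hz i
  have := abs_nonneg (z i)
  linarith

lemma coord_cont (i : Fin d) : Continuous (fun x : Euc d => x i) :=
  (EuclideanSpace.proj i).continuous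

lemma gfun_cont : Continuous (gfun d) :=
  ((coord_cont 0).max continuous_const).mul
    (continuous_finset_prod _ fun i _ => continuous_const.sub (coord_cont i).abs)

lemma cont_intOn {f : Euc d → ℝ} (hf : Continuous f) (r : ℝ) :
    IntegrableOn f (closedBall (0 : Euc d) r) volume :=
  hf.continuousOn.integrableOn_compact (isCompact_closedBall _ _)

lemma scale_int (d : ℕ) [NeZero d] {ε : ℝ} (hε : 0 < ε) (f : Euc d → ℝ) :
    ∫ z in closedBall (0:Euc d) ε, f z = ε ^ d * ∫ w in closedBall (0:Euc d) 1, f (ε • w) := by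
  have h := Measure.setIntegral_comp_smul_of_pos (volume : Measure (Euc d)) f
    (closedBall (0 : Euc d) 1) hε
  rw [smul_unitClosedBall, Real.norm_eq_abs, abs_of_pos hε, finrank_euclideanSpace_fin] at h
  rw [h, smul_eq_mul]
  rw [← mul_assoc, mul_inv_cancel₀ (pow_ne_zero _ hε.ne'), one_mul]

lemma neg_symm_int (d : ℕ) [NeZero d] (r : ℝ) (f : Euc d → ℝ) :
    ∫ z in closedBall (0:Euc d) r, f (-z) = ∫ z in closedBall (0:Euc d) r, f z := by
  rw [← integral_indicator (measurableSet_closedBall (x := (0:Euc d)) (ε := r)),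
      ← integral_indicator (measurableSet_closedBall (x := (0:Euc d)) (ε := r))]
  have h1 : ∀ z : Euc d, Set.indicator (closedBall (0:Euc d) r) (fun z => f (-z)) z =
      Set.indicator (closedBall (0:Euc d) r) f (-z) := by
    intro z
    by_cases hz : z ∈ closedBall (0:Euc d) r
    · have hz' : -z ∈ closedBall (0:Euc d) r := by
        rwa [mem_closedBall, dist_zero_right, norm_neg, ← dist_zero_right]
      rw [Set.indicator_of_mem hz, Set.indicator_of_mem hz']
    · have hz' : -z ∉ closedBall (0:Euc d) r := by
        simp only [mem_closedBall, dist_zero_right, norm_neg] at *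
        exact hz
      rw [Set.indicator_of_notMem hz, Set.indicator_of_notMem hz']
  simp_rw [h1]
  exact integral_neg_eq_self _ _

lemma max_add_max_neg (a : ℝ) : max a 0 + max (-a) 0 = |a| := by
  rcases le_total a 0 with h | h
  · rw [max_eq_right h, max_eq_left (by linarith), abs_of_nonpos h]; ring
  · rw [max_eq_left h, max_eq_right (by linarith), abs_of_nonneg h]; ring

/-- `∫ max (w 0) 0` over the unit ball is `σ_d / 2`. -/
lemma halfint (d : ℕ) [NeZero d] (φ : Euc d → ℝ) (hφ : Continuous φ)
    (hφn : ∀ w : Euc d, φ (-w) = φ w) :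
    ∫ w in closedBall (0:Euc d) 1, max (w 0) 0 * φ w =
      (1/2) * ∫ w in closedBall (0:Euc d) 1, |w 0| * φ w := by
  have hneg : ∫ w in closedBall (0:Euc d) 1, max (-(w 0)) 0 * φ w =
      ∫ w in closedBall (0:Euc d) 1, max (w 0) 0 * φ w := by
    have := neg_symm_int d 1 (fun w => max (w 0) 0 * φ w)
    have he : ∀ w : Euc d, max ((-w) 0) 0 * φ (-w) = max (-(w 0)) 0 * φ w := by
      intro w
      rw [hφn w]
      rfl
    rw [← this]
    refine integral_congr_ae (Eventually.of_forall fun w => ?_)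
    exact (he w).symm
  have hi1 : IntegrableOn (fun w : Euc d => max (w 0) 0 * φ w) (closedBall (0:Euc d) 1) :=
    cont_intOn (((coord_cont 0).max continuous_const).mul hφ) 1
  have hi2 : IntegrableOn (fun w : Euc d => max (-(w 0)) 0 * φ w) (closedBall (0:Euc d) 1) :=
    cont_intOn ((((coord_cont 0).neg).max continuous_const).mul hφ) 1
  have hsum : ∫ w in closedBall (0:Euc d) 1, (max (w 0) 0 * φ w + max (-(w 0)) 0 * φ w) =
      ∫ w in closedBall (0:Euc d) 1, |w 0| * φ w := by
    congr 1
    ext w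
    rw [← add_mul, max_add_max_neg]
  rw [integral_add hi1 hi2, hneg] at hsum
  linarith

lemma prod_one_sub_ge {ι : Type*} (s : Finset ι) (a : ι → ℝ)
    (h0 : ∀ i ∈ s, 0 ≤ a i) (h1 : ∀ i ∈ s, a i ≤ 1) :
    1 - ∑ i ∈ s, a i ≤ ∏ i ∈ s, (1 - a i) := by
  classical
  induction s using Finset.induction_on with
  | empty => simp
  | @insert x s' hx ih =>
    rw [Finset.sum_insert hx, Finset.prod_insert hx]
    have hx0 := h0 x (Finset.mem_insert_self x s')
    have hx1 := h1 x (Finset.mem_insert_self x s')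
    have ih' := ih (fun i hi => h0 i (Finset.mem_insert_of_mem hi))
      (fun i hi => h1 i (Finset.mem_insert_of_mem hi))
    have hs0 : 0 ≤ ∑ i ∈ s', a i := Finset.sum_nonneg (fun i hi => h0 i (Finset.mem_insert_of_mem hi))
    nlinarith [mul_le_mul_of_nonneg_left ih' (by linarith : (0:ℝ) ≤ 1 - a x)]

lemma prod_le_one_sub {ι : Type*} (s : Finset ι) (a : ι → ℝ) {j : ι} (hj : j ∈ s)
    (h0 : ∀ i ∈ s, 0 ≤ a i) (h1 : ∀ i ∈ s, a i ≤ 1) :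
    ∏ i ∈ s, (1 - a i) ≤ 1 - a j := by
  classical
  rw [← Finset.mul_prod_erase s _ hj]
  have hprod : ∏ i ∈ s.erase j, (1 - a i) ≤ 1 := by
    apply Finset.prod_le_one
    · intro i hi; have := h1 i (Finset.mem_of_mem_erase hi); linarith
    · intro i hi; have := h0 i (Finset.mem_of_mem_erase hi); linarith
  have hja : 0 ≤ 1 - a j := by have := h1 j hj; linarith
  nlinarith

lemma alphad_pos (d : ℕ) [NeZero d] : 0 < (volume (closedBall (0 : Euc d) 1)).toReal := by
  rw [ENNReal.toReal_pos_iff]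
  exact ⟨measure_closedBall_pos volume 0 one_pos |>.trans_le le_rfl,
    measure_closedBall_lt_top⟩

lemma coordzero_null (i : Fin d) : volume {w : Euc d | w i = 0} = 0 := by
  have : {w : Euc d | w i = 0} =
      (LinearMap.ker ((EuclideanSpace.proj i : Euc d →L[ℝ] ℝ) : Euc d →ₗ[ℝ] ℝ) : Set (Euc d)) := by
    ext w
    simp [LinearMap.mem_ker]
  rw [this]
  apply Measure.addHaar_submodule
  intro htop
  have h1 : EuclideanSpace.single i (1:ℝ) ∈
      LinearMap.ker ((EuclideanSpace.proj i : Euc d →L[ℝ] ℝ) : Euc d →ₗ[ℝ] ℝ) := by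
    rw [htop]; trivial
  rw [LinearMap.mem_ker] at h1
  have : (EuclideanSpace.single i (1:ℝ)) i = (1:ℝ) := by simp
  rw [show ((EuclideanSpace.proj i : Euc d →L[ℝ] ℝ) : Euc d →ₗ[ℝ] ℝ)
    (EuclideanSpace.single i (1:ℝ)) = (EuclideanSpace.single i (1:ℝ)) i from rfl] at h1
  rw [this] at h1
  exact one_ne_zero h1

lemma kappa_pos (i : Fin d) :
    0 < ∫ w in closedBall (0:Euc d) 1, |w 0| * |w i| := by
  rw [setIntegral_pos_iff_support_of_nonneg_ae]
  · have hsub : closedBall (0:Euc d) 1 \ (Function.support (fun w : Euc d => |w 0| * |w i|) ∩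
        closedBall (0:Euc d) 1) ⊆ {w : Euc d | w 0 = 0} ∪ {w : Euc d | w i = 0} := by
      intro w hw
      obtain ⟨hw1, hw2⟩ := hw
      by_contra hcon
      simp only [Set.mem_union, Set.mem_setOf_eq, not_or] at hcon
      exact hw2 ⟨fun h => by
        rcases mul_eq_zero.1 h with h | h
        · exact hcon.1 (abs_eq_zero.1 h)
        · exact hcon.2 (abs_eq_zero.1 h), hw1⟩
    have hnull : volume (closedBall (0:Euc d) 1 \
        (Function.support (fun w : Euc d => |w 0| * |w i|) ∩ closedBall (0:Euc d) 1)) = 0 := by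
      refine measure_mono_null hsub ?_
      exact le_antisymm (le_trans (measure_union_le _ _)
        (by rw [coordzero_null 0, coordzero_null i]; simp)) zero_le
    have hball := measure_closedBall_pos (volume : Measure (Euc d)) (0:Euc d) one_pos
    set Sp := Function.support (fun w : Euc d => |w 0| * |w i|) ∩ closedBall (0:Euc d) 1 with hSp
    have hle : volume (closedBall (0:Euc d) 1) ≤ volume Sp := by
      calc volume (closedBall (0:Euc d) 1)
          ≤ volume (Sp ∪ (closedBall (0:Euc d) 1 \ Sp)) := by
            apply measure_mono
            intro w hw
            by_cases h : w ∈ Sp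
            · exact Or.inl h
            · exact Or.inr ⟨hw, h⟩
        _ ≤ volume Sp + volume (closedBall (0:Euc d) 1 \ Sp) := measure_union_le _ _
        _ = volume Sp := by rw [hnull, add_zero]
    exact lt_of_lt_of_le hball hle
  · exact Eventually.of_forall (fun w => mul_nonneg (abs_nonneg _) (abs_nonneg _))
  · exact cont_intOn ((coord_cont 0).abs.mul (coord_cont i).abs) 1


lemma smul_coord (ε : ℝ) (w : Euc d) (i : Fin d) : (ε • w) i = ε * w i := rfl

lemma max_mul_right {ε a : ℝ} (hε : 0 ≤ ε) : max (ε * a) 0 = ε * max a 0 := by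
  rcases le_total a 0 with h | h
  · rw [max_eq_right (mul_nonpos_of_nonneg_of_nonpos hε h), max_eq_right h, mul_zero]
  · rw [max_eq_left (mul_nonneg hε h), max_eq_left h]

lemma int_max_scaled {ε : ℝ} (hε : 0 < ε) :
    ∫ z in closedBall (0:Euc d) ε, max (z 0) 0 =
      ε ^ (d+1) * ∫ w in closedBall (0:Euc d) 1, max (w 0) 0 := by
  rw [scale_int d hε (fun z => max (z 0) 0)]
  simp_rw [smul_coord, max_mul_right hε.le]
  rw [integral_const_mul]
  ring

lemma int_maxpair_scaled {ε : ℝ} (hε : 0 < ε) (j : Fin d) :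
    ∫ z in closedBall (0:Euc d) ε, max (z 0) 0 * |z j| =
      ε ^ (d+2) * ∫ w in closedBall (0:Euc d) 1, max (w 0) 0 * |w j| := by
  rw [scale_int d hε (fun z => max (z 0) 0 * |z j|)]
  have : ∀ w : Euc d, max ((ε • w) 0) 0 * |(ε • w) j| =
      ε^2 * (max (w 0) 0 * |w j|) := by
    intro w
    rw [smul_coord, smul_coord, max_mul_right hε.le, abs_mul, abs_of_pos hε]
    ring
  simp_rw [this]
  rw [integral_const_mul]
  ring

lemma int_pair_scaled {ε : ℝ} (hε : 0 < ε) (j : Fin d) :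
    ∫ z in closedBall (0:Euc d) ε, |z 0| * |z j| =
      ε ^ (d+2) * ∫ w in closedBall (0:Euc d) 1, |w 0| * |w j| := by
  rw [scale_int d hε (fun z => |z 0| * |z j|)]
  have : ∀ w : Euc d, |(ε • w) 0| * |(ε • w) j| = ε^2 * (|w 0| * |w j|) := by
    intro w
    rw [smul_coord, smul_coord, abs_mul, abs_mul, abs_of_pos hε]
    ring
  simp_rw [this]
  rw [integral_const_mul]
  ring

lemma Ki_le (i : Fin d) :
    ∫ w in closedBall (0:Euc d) 1, |w 0| * |w i| ≤ alphad d := by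
  have h1 : ∫ w in closedBall (0:Euc d) 1, (1:ℝ) = alphad d := by
    rw [setIntegral_const, smul_eq_mul, mul_one, alphad]
    rfl
  rw [← h1]
  apply setIntegral_mono_on
  · exact cont_intOn ((coord_cont 0).abs.mul (coord_cont i).abs) 1
  · exact cont_intOn continuous_const 1
  · exact measurableSet_closedBall
  · intro w hw
    rw [mem_closedBall, dist_zero_right] at hw
    have h0 := abs_coord_le w 0
    have hi := abs_coord_le w i
    nlinarith [abs_nonneg (w 0), abs_nonneg (w i)]

lemma gfun_nonneg {z : Euc d} (hz : ∀ i, |z i| ≤ 1/2) : 0 ≤ gfun d z := by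
  apply mul_nonneg (le_max_right _ _)
  apply Finset.prod_nonneg
  intro i _
  have := hz i
  linarith

lemma g_low {z : Euc d} (hz : ∀ i, |z i| ≤ 1/2) :
    max (z 0) 0 - |z 0| * ∑ i ∈ Finset.univ.erase (0 : Fin d), |z i| ≤ gfun d z := by
  have hP := prod_one_sub_ge (Finset.univ.erase (0 : Fin d)) (fun i => |z i|)
    (fun i _ => abs_nonneg _) (fun i _ => by have := hz i; linarith)
  have hm0 : 0 ≤ max (z 0) 0 := le_max_right _ _
  have hma : max (z 0) 0 ≤ |z 0| := max_le (le_abs_self _) (abs_nonneg _)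
  have hS : 0 ≤ ∑ i ∈ Finset.univ.erase (0 : Fin d), |z i| :=
    Finset.sum_nonneg (fun i _ => abs_nonneg _)
  have := mul_le_mul_of_nonneg_left hP hm0
  unfold gfun
  nlinarith

lemma g_high {z : Euc d} (hz : ∀ i, |z i| ≤ 1/2) {j : Fin d} (hj : j ≠ 0) :
    gfun d z ≤ max (z 0) 0 - max (z 0) 0 * |z j| := by
  have hP := prod_le_one_sub (Finset.univ.erase (0 : Fin d)) (fun i => |z i|)
    (Finset.mem_erase.2 ⟨hj, Finset.mem_univ j⟩)
    (fun i _ => abs_nonneg _) (fun i _ => by have := hz i; linarith)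
  have hm0 : 0 ≤ max (z 0) 0 := le_max_right _ _
  have := mul_le_mul_of_nonneg_left hP hm0
  unfold gfun
  nlinarith

lemma nl_eq {ε : ℝ} (hε : 0 < ε) (hε2 : ε ≤ 1/2) :
    nlPerim d ε (Om d) = (2 / ε ^ (d+1)) * ∫ z in closedBall (0:Euc d) ε, gfun d z := by
  have hzall : ∀ z ∈ closedBall (0:Euc d) ε, ∀ i, |z i| ≤ 1/2 := by
    intro z hz i
    rw [mem_closedBall, dist_zero_right] at hz
    exact le_trans (abs_coord_le z i) (le_trans hz hε2)
  have step1 : nlPerim d ε (Om d) =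
      (2 / ε ^ (d+1)) * ∫ x in Om d, (nu d ε x).toReal := by
    unfold nlPerim
    congr 1
    refine setIntegral_congr_fun Om_meas (fun x _ => ?_)
    exact inner_eq ε x
  rw [step1]
  have step2 : ∫ x in Om d, (nu d ε x).toReal = (∫⁻ x in Om d, nu d ε x).toReal := by
    apply integral_toReal ((nu_meas ε).aemeasurable)
    exact Eventually.of_forall (fun x =>
      lt_of_le_of_lt (measure_mono Set.inter_subset_right) measure_closedBall_lt_top)
  rw [step2, lint_eq]
  have step3 : ∫⁻ z in closedBall (0:Euc d) ε, volume (hset d z) =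
      ∫⁻ z in closedBall (0:Euc d) ε, ENNReal.ofReal (gfun d z) := by
    refine setLIntegral_congr_fun measurableSet_closedBall ?_
    exact fun z hz => hvol (hzall z hz)
  rw [step3]
  have step4 : ∫ z in closedBall (0:Euc d) ε, gfun d z =
      (∫⁻ z in closedBall (0:Euc d) ε, ENNReal.ofReal (gfun d z)).toReal := by
    apply integral_eq_lintegral_of_nonneg_ae
    · exact ae_restrict_of_forall_mem measurableSet_closedBall
        (fun z hz => gfun_nonneg (hzall z hz))
    · exact gfun_cont.aestronglyMeasurable.restrict
  rw [step4]

lemma master (hd : 2 ≤ d) {ε : ℝ} (hε : 0 < ε) (hε2 : ε ≤ 1/2) :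
    sigmad d - (2 * ((d:ℝ) - 1) * alphad d) * ε ≤ nlPerim d ε (Om d) ∧
    nlPerim d ε (Om d) ≤ sigmad d -
      (∫ w in closedBall (0:Euc d) 1,
        |w 0| * |w (⟨1, lt_of_lt_of_le one_lt_two hd⟩ : Fin d)|) * ε := by
  set j : Fin d := ⟨1, lt_of_lt_of_le one_lt_two hd⟩ with hjdef
  have hj : j ≠ 0 := by
    intro h
    have : (j : ℕ) = ((0 : Fin d) : ℕ) := congrArg Fin.val h
    rw [Fin.val_zero] at this
    exact one_ne_zero this
  have hzall : ∀ z ∈ closedBall (0:Euc d) ε, ∀ i, |z i| ≤ 1/2 := by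
    intro z hz i
    rw [mem_closedBall, dist_zero_right] at hz
    exact le_trans (abs_coord_le z i) (le_trans hz hε2)
  have hIg : IntegrableOn (gfun d) (closedBall (0:Euc d) ε) := cont_intOn gfun_cont ε
  have hclow : Continuous (fun z : Euc d =>
      max (z 0) 0 - |z 0| * ∑ i ∈ Finset.univ.erase (0 : Fin d), |z i|) :=
    ((coord_cont 0).max continuous_const).sub ((coord_cont 0).abs.mul
      (continuous_finset_sum _ fun i _ => (coord_cont i).abs))
  have hchigh : Continuous (fun z : Euc d => max (z 0) 0 - max (z 0) 0 * |z j|) :=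
    ((coord_cont 0).max continuous_const).sub
      (((coord_cont 0).max continuous_const).mul (coord_cont j).abs)
  have hlow : (∫ z in closedBall (0:Euc d) ε,
      (max (z 0) 0 - |z 0| * ∑ i ∈ Finset.univ.erase (0 : Fin d), |z i|)) ≤
      ∫ z in closedBall (0:Euc d) ε, gfun d z := by
    refine setIntegral_mono_on (cont_intOn hclow ε) hIg measurableSet_closedBall ?_
    exact fun z hz => g_low (hzall z hz)
  have hhigh : (∫ z in closedBall (0:Euc d) ε, gfun d z) ≤
      ∫ z in closedBall (0:Euc d) ε, (max (z 0) 0 - max (z 0) 0 * |z j|) := by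
    refine setIntegral_mono_on hIg (cont_intOn hchigh ε) measurableSet_closedBall ?_
    exact fun z hz => g_high (hzall z hz) hj
  -- scaled values
  have hM : ∫ w in closedBall (0:Euc d) 1, max (w 0) 0 = (1/2) * sigmad d := by
    have := halfint d (fun _ => (1:ℝ)) continuous_const (fun _ => rfl)
    simp_rw [mul_one] at this
    exact this
  have hKj : ∫ w in closedBall (0:Euc d) 1, max (w 0) 0 * |w j| =
      (1/2) * ∫ w in closedBall (0:Euc d) 1, |w 0| * |w j| := by
    refine halfint d (fun w => |w j|) (coord_cont j).abs (fun w => ?_)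
    show |(-w) j| = |w j|
    have : (-w) j = -(w j) := rfl
    rw [this, abs_neg]
  have hintmax : IntegrableOn (fun z : Euc d => max (z 0) 0) (closedBall (0:Euc d) ε) :=
    cont_intOn ((coord_cont 0).max continuous_const) ε
  -- value of the low integral
  have hlowval : (∫ z in closedBall (0:Euc d) ε,
      (max (z 0) 0 - |z 0| * ∑ i ∈ Finset.univ.erase (0 : Fin d), |z i|)) =
      ε^(d+1) * ((1/2) * sigmad d) -
        ε^(d+2) * ∑ i ∈ Finset.univ.erase (0 : Fin d),
          ∫ w in closedBall (0:Euc d) 1, |w 0| * |w i| := by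
    rw [integral_sub hintmax (cont_intOn (f := fun z : Euc d =>
      |z 0| * ∑ i ∈ Finset.univ.erase (0 : Fin d), |z i|) ((coord_cont 0).abs.mul
      (continuous_finset_sum _ fun i _ => (coord_cont i).abs)) ε)]
    rw [int_max_scaled hε, hM]
    congr 1
    have hms : ∀ z : Euc d, |z 0| * ∑ i ∈ Finset.univ.erase (0 : Fin d), |z i| =
        ∑ i ∈ Finset.univ.erase (0 : Fin d), |z 0| * |z i| := fun z => Finset.mul_sum _ _ _
    simp_rw [hms]
    rw [integral_finset_sum _ (fun i _ => cont_intOn (f := fun z : Euc d => |z 0| * |z i|) ((coord_cont 0).abs.mul (coord_cont i).abs) ε)]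
    rw [Finset.mul_sum]
    exact Finset.sum_congr rfl (fun i _ => int_pair_scaled hε i)
  have hhighval : (∫ z in closedBall (0:Euc d) ε, (max (z 0) 0 - max (z 0) 0 * |z j|)) =
      ε^(d+1) * ((1/2) * sigmad d) -
        ε^(d+2) * ((1/2) * ∫ w in closedBall (0:Euc d) 1, |w 0| * |w j|) := by
    rw [integral_sub hintmax (cont_intOn (f := fun z : Euc d => max (z 0) 0 * |z j|) (((coord_cont 0).max continuous_const).mul
      (coord_cont j).abs) ε)]
    rw [int_max_scaled hε, hM, int_maxpair_scaled hε j, hKj]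
  -- bound on the sum of Ki
  have hsumK : ∑ i ∈ Finset.univ.erase (0 : Fin d),
      (∫ w in closedBall (0:Euc d) 1, |w 0| * |w i|) ≤ ((d:ℝ) - 1) * alphad d := by
    have h1 : ∑ i ∈ Finset.univ.erase (0 : Fin d),
        (∫ w in closedBall (0:Euc d) 1, |w 0| * |w i|) ≤
        ∑ _i ∈ Finset.univ.erase (0 : Fin d), alphad d :=
      Finset.sum_le_sum (fun i _ => Ki_le i)
    rw [Finset.sum_const, Finset.card_erase_of_mem (Finset.mem_univ _), Finset.card_univ,
      Fintype.card_fin, nsmul_eq_mul] at h1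
    have hd1 : ((d - 1 : ℕ) : ℝ) = (d:ℝ) - 1 := by
      have : 1 ≤ d := Nat.one_le_of_lt (lt_of_lt_of_le one_lt_two hd)
      push_cast [Nat.cast_sub this]
      ring
    rw [hd1] at h1
    exact h1
  have hεp : (0:ℝ) < ε ^ (d+1) := pow_pos hε _
  have hfac : (0:ℝ) < 2 / ε ^ (d+1) := by positivity
  rw [nl_eq hε hε2]
  constructor
  · have hA : ε^(d+1) * ((1/2) * sigmad d) - ε^(d+2) * (((d:ℝ) - 1) * alphad d) ≤
        ∫ z in closedBall (0:Euc d) ε, gfun d z := by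
      refine le_trans ?_ hlow
      rw [hlowval]
      have : (0:ℝ) ≤ ε^(d+2) := by positivity
      nlinarith
    have := mul_le_mul_of_nonneg_left hA hfac.le
    refine le_trans (le_of_eq ?_) this
    have hpow : ε^(d+2) = ε^(d+1) * ε := by ring
    field_simp
    ring
  · have hB : (∫ z in closedBall (0:Euc d) ε, gfun d z) ≤
        ε^(d+1) * ((1/2) * sigmad d) -
          ε^(d+2) * ((1/2) * ∫ w in closedBall (0:Euc d) 1, |w 0| * |w j|) := by
      rw [← hhighval]; exact hhigh
    have := mul_le_mul_of_nonneg_left hB hfac.le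
    refine le_trans this (le_of_eq ?_)
    have hpow : ε^(d+2) = ε^(d+1) * ε := by ring
    field_simp
    ring

end HC

/-- for the half cube `Ω = {x ∈ D : x_1 ≤ 1/2}` (whose relative
perimeter is 1) the bias is exactly of order `ε`. -/
theorem halfcube_linear_bias (d : ℕ) [NeZero d] (hd : 2 ≤ d) :
    ∃ c > (0:ℝ), ∃ C > (0:ℝ), ∃ ε₀ > (0:ℝ), ∀ ε : ℝ, 0 < ε → ε < ε₀ →
      c * ε ≤ |nlPerim d ε {x ∈ unitCube d | x 0 ≤ 1/2} - sigmad d| ∧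
      |nlPerim d ε {x ∈ unitCube d | x 0 ≤ 1/2} - sigmad d| ≤ C * ε := by
  have hOm : {x ∈ unitCube d | x 0 ≤ 1/2} = HC.Om d := rfl
  rw [hOm]
  refine ⟨∫ w in closedBall (0:Euc d) 1,
      |w 0| * |w (⟨1, lt_of_lt_of_le one_lt_two hd⟩ : Fin d)|,
    HC.kappa_pos _, 2 * ((d:ℝ) - 1) * alphad d, ?_, 1/2, by norm_num, ?_⟩
  · have h1 : (0:ℝ) < alphad d := HC.alphad_pos d
    have h2 : (2:ℝ) ≤ (d:ℝ) := by exact_mod_cast hd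
    nlinarith
  · intro ε hε hε2
    obtain ⟨h1, h2⟩ := HC.master hd hε (le_of_lt hε2)
    have hκ : (0:ℝ) < ∫ w in closedBall (0:Euc d) 1,
        |w 0| * |w (⟨1, lt_of_lt_of_le one_lt_two hd⟩ : Fin d)| := HC.kappa_pos _
    have hlt : nlPerim d ε (HC.Om d) - sigmad d < 0 := by nlinarith
    rw [abs_of_neg hlt]
    constructor
    · nlinarith
    · nlinarith

end
end
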